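/- Every countable coded β-model satisfies ATR₀ (and hence ACA₀), provably in ACA₀. -/

import Mathlib

namespace Paper

/-! ### Syntax and semantics of second-order arithmetic (L₂) -/

/-- Number terms of L₂. -/
inductive Term where
  | var : ℕ → Term
  | zero : Term
  | one : Term
  | add : Term → Term → Term
  | mul : Term → Term → Term

/-- Formulas of L₂.  Number variables and set variables are indexed by naturals;
`mem t i` means `t ∈ X_i`. -/
inductive Formula where
  | eq : Term → Term → Formula
  | lt : Term → Term → Formula
  | mem : Term → ℕ → Formula
  | not : Formula → Formula
  | and : Formula → Formula → Formula
  | or : Formula → Formula → Formula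
  | nall : ℕ → Formula → Formula
  | nex : ℕ → Formula → Formula
  | sall : ℕ → Formula → Formula
  | sex : ℕ → Formula → Formula

def Term.val (e : ℕ → ℕ) : Term → ℕ
  | .var i => e i
  | .zero => 0
  | .one => 1
  | .add s t => s.val e + t.val e
  | .mul s t => s.val e * t.val e

/-- Satisfaction in the full standard model: set quantifiers range over all subsets of ℕ. -/
def Formula.Sat (e : ℕ → ℕ) (E : ℕ → Set ℕ) : Formula → Prop
  | .eq s t => s.val e = t.val e
  | .lt s t => s.val e < t.val e
  | .mem t i => t.val e ∈ E i
  | .not φ => ¬ φ.Sat e E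
  | .and φ ψ => φ.Sat e E ∧ ψ.Sat e E
  | .or φ ψ => φ.Sat e E ∨ ψ.Sat e E
  | .nall i φ => ∀ n : ℕ, φ.Sat (Function.update e i n) E
  | .nex i φ => ∃ n : ℕ, φ.Sat (Function.update e i n) E
  | .sall i φ => ∀ X : Set ℕ, φ.Sat e (Function.update E i X)
  | .sex i φ => ∃ X : Set ℕ, φ.Sat e (Function.update E i X)

/-- Satisfaction in an ω-model with second-order part `M`:
set quantifiers range over `M`. -/
def Formula.SatIn (M : Set (Set ℕ)) (e : ℕ → ℕ) (E : ℕ → Set ℕ) : Formula → Prop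
  | .eq s t => s.val e = t.val e
  | .lt s t => s.val e < t.val e
  | .mem t i => t.val e ∈ E i
  | .not φ => ¬ φ.SatIn M e E
  | .and φ ψ => φ.SatIn M e E ∧ ψ.SatIn M e E
  | .or φ ψ => φ.SatIn M e E ∨ ψ.SatIn M e E
  | .nall i φ => ∀ n : ℕ, φ.SatIn M (Function.update e i n) E
  | .nex i φ => ∃ n : ℕ, φ.SatIn M (Function.update e i n) E
  | .sall i φ => ∀ X ∈ M, φ.SatIn M e (Function.update E i X)
  | .sex i φ => ∃ X ∈ M, φ.SatIn M e (Function.update E i X)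

/-- A formula is arithmetic if it has no set quantifiers. -/
def Formula.Arithmetic : Formula → Prop
  | .eq _ _ => True
  | .lt _ _ => True
  | .mem _ _ => True
  | .not φ => φ.Arithmetic
  | .and φ ψ => φ.Arithmetic ∧ ψ.Arithmetic
  | .or φ ψ => φ.Arithmetic ∧ ψ.Arithmetic
  | .nall _ φ => φ.Arithmetic
  | .nex _ φ => φ.Arithmetic
  | .sall _ _ => False
  | .sex _ _ => False

mutual
  /-- Σ¹ₙ formulas (in prenex normal form). -/
  inductive Formula.IsSigma : ℕ → Formula → Prop where
    | arith {n : ℕ} {φ : Formula} : φ.Arithmetic → Formula.IsSigma n φ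
    | ofPi {n : ℕ} {φ : Formula} : Formula.IsPi n φ → Formula.IsSigma (n+1) φ
    | sex {n i : ℕ} {φ : Formula} :
        Formula.IsSigma (n+1) φ → Formula.IsSigma (n+1) (.sex i φ)
  /-- Π¹ₙ formulas (in prenex normal form). -/
  inductive Formula.IsPi : ℕ → Formula → Prop where
    | arith {n : ℕ} {φ : Formula} : φ.Arithmetic → Formula.IsPi n φ
    | ofSigma {n : ℕ} {φ : Formula} : Formula.IsSigma n φ → Formula.IsPi (n+1) φ
    | sall {n i : ℕ} {φ : Formula} :
        Formula.IsPi (n+1) φ → Formula.IsPi (n+1) (.sall i φ)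
end

/-- Quantifier-free formulas. -/
def Formula.QFree : Formula → Prop
  | .eq _ _ => True
  | .lt _ _ => True
  | .mem _ _ => True
  | .not φ => φ.QFree
  | .and φ ψ => φ.QFree ∧ ψ.QFree
  | .or φ ψ => φ.QFree ∧ ψ.QFree
  | .nall _ _ => False
  | .nex _ _ => False
  | .sall _ _ => False
  | .sex _ _ => False

/-- Existential (Σ⁰₁-defining) formulas: number-existential quantifiers over a
quantifier-free matrix.  (By the relativized Matiyasevich theorem these define
exactly the sets r.e. in the set parameters.) -/
inductive Formula.Existential : Formula → Prop where
  | qf {φ : Formula} : φ.QFree → Formula.Existential φ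
  | nex {i : ℕ} {φ : Formula} : Formula.Existential φ → Formula.Existential (.nex i φ)

/-- Gödel codes of terms. -/
def Term.code : Term → ℕ
  | .var i => Nat.pair 0 i
  | .zero => Nat.pair 1 0
  | .one => Nat.pair 2 0
  | .add s t => Nat.pair 3 (Nat.pair s.code t.code)
  | .mul s t => Nat.pair 4 (Nat.pair s.code t.code)

/-- Gödel codes of formulas. -/
def Formula.code : Formula → ℕ
  | .eq s t => Nat.pair 0 (Nat.pair s.code t.code)
  | .lt s t => Nat.pair 1 (Nat.pair s.code t.code)
  | .mem t i => Nat.pair 2 (Nat.pair t.code i)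
  | .not φ => Nat.pair 3 φ.code
  | .and φ ψ => Nat.pair 4 (Nat.pair φ.code ψ.code)
  | .or φ ψ => Nat.pair 5 (Nat.pair φ.code ψ.code)
  | .nall i φ => Nat.pair 6 (Nat.pair i φ.code)
  | .nex i φ => Nat.pair 7 (Nat.pair i φ.code)
  | .sall i φ => Nat.pair 8 (Nat.pair i φ.code)
  | .sex i φ => Nat.pair 9 (Nat.pair i φ.code)

/-! ### Reducibilities and jumps -/

/-- `B` is r.e. in `A`: definable by an existential formula with parameter `A`
(the free number variables are all evaluated at the input `n`,
the set variables at `A`). -/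
def REIn (B A : Set ℕ) : Prop :=
  ∃ φ : Formula, φ.Existential ∧ ∀ n : ℕ, n ∈ B ↔ φ.Sat (fun _ => n) (fun _ => A)

/-- Turing reducibility: `B` is Δ⁰₁ in `A`. -/
def TuringLE (B A : Set ℕ) : Prop := REIn B A ∧ REIn Bᶜ A

/-- The Turing jump of `A`: the set of codes of true existential sentences with
parameter `A` (a complete Σ⁰₁(A) set). -/
def turingJump (A : Set ℕ) : Set ℕ :=
  {n | ∃ φ : Formula, φ.code = n ∧ φ.Existential ∧ φ.Sat (fun _ => 0) (fun _ => A)}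

/-- Hyperarithmetic reducibility: `B` is Δ¹₁ definable with parameter `A`. -/
def HypLE (B A : Set ℕ) : Prop :=
  ∃ φ ψ : Formula, φ.IsSigma 1 ∧ ψ.IsPi 1 ∧
    ∀ n : ℕ, (n ∈ B ↔ φ.Sat (fun _ => n) (fun _ => A)) ∧
      (n ∈ B ↔ ψ.Sat (fun _ => n) (fun _ => A))

/-- The hyperjump `𝒪^A` of `A`: the set of codes of true Π¹₁ sentences with
parameter `A` (a complete Π¹₁(A) set). -/
def hyperjump (A : Set ℕ) : Set ℕ :=
  {n | ∃ φ : Formula, φ.code = n ∧ φ.IsPi 1 ∧ φ.Sat (fun _ => 0) (fun _ => A)}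

/-! ### β-models and coded models -/

/-- A βₙ-model: a (nonempty) ω-model correct for Σ¹ₙ formulas with parameters
from the model. -/
def IsBetaNModel (n : ℕ) (M : Set (Set ℕ)) : Prop :=
  M.Nonempty ∧ ∀ φ : Formula, φ.IsSigma n →
    ∀ (e : ℕ → ℕ) (E : ℕ → Set ℕ), (∀ i, E i ∈ M) → (φ.SatIn M e E ↔ φ.Sat e E)

/-- A β-model is a β₁-model. -/
def IsBetaModel (M : Set (Set ℕ)) : Prop := IsBetaNModel 1 M

/-- The `i`-th slice of a real `C` coding a countable family of reals. -/
def slice (C : Set ℕ) (i : ℕ) : Set ℕ := {m | Nat.pair i m ∈ C}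

/-- The countable family of reals coded by `C`. -/
def codedFamily (C : Set ℕ) : Set (Set ℕ) := Set.range (slice C)

/-- `C` is a countable coded β-model. -/
def IsCodedBetaModel (C : Set ℕ) : Prop := IsBetaModel (codedFamily C)

/-- `C` is a countable coded βₙ-model. -/
def IsCodedBetaNModel (n : ℕ) (C : Set ℕ) : Prop := IsBetaNModel n (codedFamily C)

/-- An ω-model `M` satisfies the L₂-theory `T` (open axioms are satisfied under
all assignments with set parameters from `M`). -/
def SatisfiesTheory (M : Set (Set ℕ)) (T : Set Formula) : Prop :=
  ∀ φ ∈ T, ∀ (e : ℕ → ℕ) (E : ℕ → Set ℕ), (∀ i, E i ∈ M) → φ.SatIn M e E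

end Paper

namespace Paper

/-! ### Presentations of ordinals and `ω₁^X` -/

/-- The field of the binary relation on ℕ coded (via `Nat.pair`) by `R`. -/
def fieldOf (R : Set ℕ) : Set ℕ := {a | ∃ b, Nat.pair a b ∈ R ∨ Nat.pair b a ∈ R}

/-- The strict order relation on the field of `R` coded by `R`. -/
def codedLT (R : Set ℕ) (a b : fieldOf R) : Prop := Nat.pair a.1 b.1 ∈ R

/-- `R` is a presentation of the ordinal `α`: it codes a well-order of
a subset of ℕ of order type `α`. -/
def CodesOrdinal (R : Set ℕ) (α : Ordinal) : Prop :=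
  ∃ h : IsWellOrder (fieldOf R) (codedLT R), @Ordinal.type _ (codedLT R) h = α

/-- `ω₁^X`: the least ordinal with no presentation recursive in `X`. -/
noncomputable def omega1 (X : Set ℕ) : Ordinal :=
  sInf {α | ¬ ∃ R : Set ℕ, TuringLE R X ∧ CodesOrdinal R α}

/-- The Spector order: `A ≺ B` iff `𝒪^A ≤_H B`. -/
def spectorRel (A B : Set ℕ) : Prop := HypLE (hyperjump A) B

end Paper

namespace Paper

/-- The part of `Y` on the columns strictly `X`-below `j`. -/
def restrictBelow (X Y : Set ℕ) (j : ℕ) : Set ℕ :=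
  {p | ∃ m i, p = Nat.pair m i ∧ Nat.pair i j ∈ X ∧ Nat.pair m i ∈ Y}

/-- An ω-model satisfies arithmetical comprehension. -/
def SatArithComp (M : Set (Set ℕ)) : Prop :=
  ∀ φ : Formula, φ.Arithmetic → ∀ (e : ℕ → ℕ) (E : ℕ → Set ℕ), (∀ i, E i ∈ M) →
    {n : ℕ | φ.SatIn M (Function.update e 0 n) E} ∈ M

/-- An ω-model satisfies ACA₀ (the basic axioms and set induction hold in any
ω-model; the content is arithmetical comprehension). -/
def SatACA (M : Set (Set ℕ)) : Prop := M.Nonempty ∧ SatArithComp M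

/-- `X` codes a linear order which is a well-order *in the sense of the
ω-model `M`*: every set in `M` meeting its field has a least element. -/
def InternalWO (M : Set (Set ℕ)) (X : Set ℕ) : Prop :=
  (∀ a, Nat.pair a a ∉ X) ∧
  (∀ a b c, Nat.pair a b ∈ X → Nat.pair b c ∈ X → Nat.pair a c ∈ X) ∧
  (∀ a ∈ fieldOf X, ∀ b ∈ fieldOf X, a = b ∨ Nat.pair a b ∈ X ∨ Nat.pair b a ∈ X) ∧
  (∀ Z ∈ M, (∃ a, a ∈ Z ∧ a ∈ fieldOf X) →
    ∃ a, a ∈ Z ∧ a ∈ fieldOf X ∧ ∀ b, b ∈ Z → b ∈ fieldOf X → Nat.pair b a ∉ X)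

/-- An ω-model satisfies ATR₀: ACA₀ together with arithmetical transfinite
recursion along any of its internal well-orders. -/
def SatATR (M : Set (Set ℕ)) : Prop :=
  SatACA M ∧
  ∀ θ : Formula, θ.Arithmetic → ∀ (e : ℕ → ℕ) (E : ℕ → Set ℕ), (∀ i, E i ∈ M) →
    ∀ X ∈ M, InternalWO M X →
      ∃ Y ∈ M, ∀ j ∈ fieldOf X, ∀ n : ℕ,
        (Nat.pair n j ∈ Y ↔
          θ.SatIn M (Function.update e 0 n) (Function.update E 0 (restrictBelow X Y j)))

end Paper

/-!
A β-model `M` is correct for Σ¹₁ statements with parameters in `M`: an arithmetical property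
of a set that has a witness at all has a witness in `M`. Arithmetical comprehension follows by
reflecting `∃ Z, ∀ n, n ∈ Z ↔ φ n`. An internal well-order `X` of `M` is truly well-founded,
since a nonempty set without `X`-minimal element would be reflected into `M`. Transfinite
recursion along `X` then builds the hierarchy of ATR outright, and reflecting the Σ¹₁ statement
that it exists puts one into `M`.
-/

namespace Paper

namespace Term

def numBound : Term → ℕ
  | .var i => i + 1
  | .zero => 0
  | .one => 0
  | .add s t => max s.numBound t.numBound
  | .mul s t => max s.numBound t.numBound

theorem val_congr {t : Term} {e e' : ℕ → ℕ} (h : ∀ i < t.numBound, e i = e' i) :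
    t.val e = t.val e' := by
  induction t with
  | var i => exact h i (Nat.lt_succ_self i)
  | zero | one => rfl
  | add s t ihs iht | mul s t ihs iht =>
    simp only [numBound, lt_max_iff] at h
    simp only [val, ihs fun i hi => h i (.inl hi), iht fun i hi => h i (.inr hi)]

end Term

theorem forall_lt_update_eq_update {α : Type*} {f g : ℕ → α} {b : ℕ} (h : ∀ i < b, f i = g i)
    (k : ℕ) (x : α) : ∀ i < b, Function.update f k x i = Function.update g k x i := by
  intro i hi
  simp only [Function.update_apply]
  split_ifs
  · rfl
  · exact h i hi

namespace Formula

def numBound : Formula → ℕ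
  | .eq s t | .lt s t => max s.numBound t.numBound
  | .mem t _ => t.numBound
  | .not φ | .sall _ φ | .sex _ φ => φ.numBound
  | .and φ ψ | .or φ ψ => max φ.numBound ψ.numBound
  | .nall i φ | .nex i φ => max (i + 1) φ.numBound

def setBound : Formula → ℕ
  | .eq _ _ | .lt _ _ => 0
  | .mem _ k => k + 1
  | .not φ | .nall _ φ | .nex _ φ => φ.setBound
  | .and φ ψ | .or φ ψ => max φ.setBound ψ.setBound
  | .sall i φ | .sex i φ => max (i + 1) φ.setBound

theorem sat_congr_num {φ : Formula} {e e' : ℕ → ℕ} (h : ∀ i < φ.numBound, e i = e' i)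
    (E : ℕ → Set ℕ) : φ.Sat e E ↔ φ.Sat e' E := by
  induction φ generalizing e e' E with
  | eq s t | lt s t =>
    simp only [numBound, lt_max_iff] at h
    simp only [Sat, Term.val_congr fun i hi => h i (.inl hi),
      Term.val_congr fun i hi => h i (.inr hi)]
  | mem t k => simp only [Sat, Term.val_congr h]
  | not φ ih => exact not_congr (ih h E)
  | and φ ψ ihφ ihψ | or φ ψ ihφ ihψ =>
    simp only [numBound, lt_max_iff] at h
    simp only [Sat, ihφ (fun i hi => h i (.inl hi)) E, ihψ (fun i hi => h i (.inr hi)) E]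
  | nall i φ ih | nex i φ ih =>
    simp only [numBound, lt_max_iff] at h
    simp only [Sat, ih (forall_lt_update_eq_update (fun k hk => h k (.inr hk)) i _) E]
  | sall i φ ih | sex i φ ih => simp only [Sat, ih h]

theorem sat_congr_set {φ : Formula} {E E' : ℕ → Set ℕ} (h : ∀ i < φ.setBound, E i = E' i)
    (e : ℕ → ℕ) : φ.Sat e E ↔ φ.Sat e E' := by
  induction φ generalizing e E E' with
  | eq s t | lt s t => rfl
  | mem t k => simp only [Sat, h k (Nat.lt_succ_self k)]
  | not φ ih => exact not_congr (ih h e)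
  | and φ ψ ihφ ihψ | or φ ψ ihφ ihψ =>
    simp only [setBound, lt_max_iff] at h
    simp only [Sat, ihφ (fun i hi => h i (.inl hi)) e, ihψ (fun i hi => h i (.inr hi)) e]
  | nall i φ ih | nex i φ ih => simp only [Sat, ih h]
  | sall i φ ih | sex i φ ih =>
    simp only [setBound, lt_max_iff] at h
    simp only [Sat, ih (forall_lt_update_eq_update (fun k hk => h k (.inr hk)) i _) e]

theorem Arithmetic.satIn_iff_sat {φ : Formula} (h : φ.Arithmetic) (M : Set (Set ℕ))
    (e : ℕ → ℕ) (E : ℕ → Set ℕ) : φ.SatIn M e E ↔ φ.Sat e E := by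
  induction φ generalizing e E with
  | eq s t | lt s t | mem t k => rfl
  | not φ ih | nall i φ ih | nex i φ ih => simp [Sat, SatIn, ih h]
  | and φ ψ ihφ ihψ | or φ ψ ihφ ihψ => simp [Sat, SatIn, ihφ h.1, ihψ h.2]
  | sall i φ ih | sex i φ ih => cases h

def imp (φ ψ : Formula) : Formula := .or (.not φ) ψ

def iff (φ ψ : Formula) : Formula := .and (φ.imp ψ) (ψ.imp φ)

@[simp] theorem sat_imp (φ ψ : Formula) (e : ℕ → ℕ) (E : ℕ → Set ℕ) :
    (φ.imp ψ).Sat e E ↔ (φ.Sat e E → ψ.Sat e E) := by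
  simp only [imp, Sat, imp_iff_not_or]

@[simp] theorem sat_iff (φ ψ : Formula) (e : ℕ → ℕ) (E : ℕ → Set ℕ) :
    (φ.iff ψ).Sat e E ↔ (φ.Sat e E ↔ ψ.Sat e E) := by
  simp only [iff, Sat, sat_imp, iff_iff_implies_and_implies]

@[simp] theorem arithmetic_imp {φ ψ : Formula} :
    (φ.imp ψ).Arithmetic ↔ φ.Arithmetic ∧ ψ.Arithmetic := Iff.rfl

@[simp] theorem arithmetic_iff {φ ψ : Formula} :
    (φ.iff ψ).Arithmetic ↔ φ.Arithmetic ∧ ψ.Arithmetic := by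
  simp only [iff, Arithmetic, arithmetic_imp]
  tauto

/-- `⟨s, t⟩ = u`, spelling out `Nat.pair` by its two cases. -/
def pairEq (s t u : Term) : Formula :=
  .or (.and (.lt s t) (.eq u ((t.mul t).add s)))
    (.and (.not (.lt s t)) (.eq u (((s.mul s).add s).add t)))

@[simp] theorem sat_pairEq (s t u : Term) (e : ℕ → ℕ) (E : ℕ → Set ℕ) :
    (pairEq s t u).Sat e E ↔ Nat.pair (s.val e) (t.val e) = u.val e := by
  by_cases hlt : s.val e < t.val e <;>
    simp [pairEq, Sat, Term.val, Nat.pair, hlt, eq_comm]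

@[simp] theorem arithmetic_pairEq (s t u : Term) : (pairEq s t u).Arithmetic := by
  simp [pairEq, Arithmetic]

/-- `⟨x_a, x_b⟩ ∈ X_k`, using the bound variable `x_v` for the pair. -/
def memPair (a b v k : ℕ) : Formula :=
  .nex v (.and (pairEq (.var a) (.var b) (.var v)) (.mem (.var v) k))

theorem sat_memPair {a b v : ℕ} (ha : a ≠ v) (hb : b ≠ v) (k : ℕ) (e : ℕ → ℕ)
    (E : ℕ → Set ℕ) : (memPair a b v k).Sat e E ↔ Nat.pair (e a) (e b) ∈ E k := by
  simp [memPair, Sat, Term.val, ha, hb]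

@[simp] theorem arithmetic_memPair (a b v k : ℕ) : (memPair a b v k).Arithmetic := by
  simp [memPair, Arithmetic]

def substMemZero (ψ : Term → Formula) : Formula → Formula
  | .mem t 0 => ψ t
  | .not φ => .not (φ.substMemZero ψ)
  | .and φ χ => .and (φ.substMemZero ψ) (χ.substMemZero ψ)
  | .or φ χ => .or (φ.substMemZero ψ) (χ.substMemZero ψ)
  | .nall i φ => .nall i (φ.substMemZero ψ)
  | .nex i φ => .nex i (φ.substMemZero ψ)
  | φ => φ

theorem Arithmetic.substMemZero {φ : Formula} (hφ : φ.Arithmetic) {ψ : Term → Formula}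
    (hψ : ∀ t, (ψ t).Arithmetic) : (φ.substMemZero ψ).Arithmetic := by
  induction φ with
  | mem t k => cases k <;> simp [Formula.substMemZero, Arithmetic, hψ]
  | not φ ih | nall i φ ih | nex i φ ih => exact ih hφ
  | and φ χ ihφ ihχ | or φ χ ihφ ihχ => exact ⟨ihφ hφ.1, ihχ hφ.2⟩
  | _ => simp_all [Formula.substMemZero, Arithmetic]

theorem sat_substMemZero {φ : Formula} (hφ : φ.Arithmetic) {J : ℕ} (hJ : φ.numBound ≤ J)
    {ψ : Term → Formula} {E : ℕ → Set ℕ} {S : ℕ → Set ℕ}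
    (hψ : ∀ t e, t.numBound ≤ J → ((ψ t).Sat e E ↔ t.val e ∈ S (e J))) (e : ℕ → ℕ) :
    (φ.substMemZero ψ).Sat e E ↔ φ.Sat e (Function.update E 0 (S (e J))) := by
  induction φ generalizing e with
  | eq s t | lt s t => rfl
  | mem t k =>
    cases k with
    | zero => simpa [substMemZero, Sat] using hψ t e hJ
    | succ k => simp [substMemZero, Sat]
  | not φ ih => exact not_congr (ih hφ hJ e)
  | and φ χ ihφ ihχ | or φ χ ihφ ihχ =>
    simp only [numBound, max_le_iff] at hJ
    simp only [substMemZero, Sat, ihφ hφ.1 hJ.1, ihχ hφ.2 hJ.2]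
  | nall i φ ih | nex i φ ih =>
    simp only [numBound, max_le_iff] at hJ
    simp only [substMemZero, Sat, ih hφ hJ.2, Function.update_of_ne (show J ≠ i by omega)]
  | sall i φ ih | sex i φ ih => cases hφ

end Formula

open Formula

theorem forall_update_mem {M : Set (Set ℕ)} {E : ℕ → Set ℕ} (hE : ∀ i, E i ∈ M) {X : Set ℕ}
    (hX : X ∈ M) (k : ℕ) : ∀ i, Function.update E k X i ∈ M :=
  (Function.forall_update_iff E fun _ Z => Z ∈ M).2 ⟨hX, fun i _ => hE i⟩

theorem IsBetaModel.exists_mem_sat {M : Set (Set ℕ)} (hM : IsBetaModel M) {φ : Formula}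
    (hφ : φ.Arithmetic) {e : ℕ → ℕ} {E : ℕ → Set ℕ} (hE : ∀ i, E i ∈ M) (k : ℕ)
    (h : ∃ Z, φ.Sat e (Function.update E k Z)) :
    ∃ Z ∈ M, φ.Sat e (Function.update E k Z) := by
  obtain ⟨Z, hZM, hZ⟩ := (hM.2 (.sex k φ) (.sex (.arith hφ)) e E hE).2 h
  exact ⟨Z, hZM, (hφ.satIn_iff_sat M e _).1 hZ⟩

theorem IsBetaModel.satArithComp {M : Set (Set ℕ)} (hM : IsBetaModel M) : SatArithComp M := by
  intro φ hφ e E hE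
  set k := φ.setBound
  have hφk : ∀ n Z, φ.Sat (Function.update e 0 n) (Function.update E k Z) ↔
      φ.Sat (Function.update e 0 n) E := fun n Z =>
    sat_congr_set (fun i hi => Function.update_of_ne hi.ne _ _) _
  obtain ⟨Z, hZM, hZ⟩ := hM.exists_mem_sat (φ := .nall 0 ((Formula.mem (.var 0) k).iff φ))
    (e := e) (by simpa [Arithmetic] using hφ) hE k
    ⟨{n | φ.Sat (Function.update e 0 n) E}, by simp [Sat, Term.val, hφk]⟩
  convert hZM using 1
  ext n
  simpa [Sat, Term.val, hφk, hφ.satIn_iff_sat, iff_comm] using hZ n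

theorem IsBetaModel.satACA {M : Set (Set ℕ)} (hM : IsBetaModel M) : SatACA M :=
  ⟨hM.1, hM.satArithComp⟩

def noMinimalFml : Formula :=
  .and (.nex 0 (.mem (.var 0) 1))
    (.nall 0 ((Formula.mem (.var 0) 1).imp (.nex 1 (.and (.mem (.var 1) 1) (memPair 1 0 2 0)))))

theorem sat_noMinimalFml (e : ℕ → ℕ) (X Z : Set ℕ) :
    noMinimalFml.Sat e (Function.update (fun _ => X) 1 Z) ↔
      Z.Nonempty ∧ ∀ a ∈ Z, ∃ b ∈ Z, Nat.pair b a ∈ X := by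
  simp [noMinimalFml, Sat, Term.val, sat_memPair, Set.Nonempty]

theorem IsBetaModel.wellFounded_of_internalWO {M : Set (Set ℕ)} (hM : IsBetaModel M)
    {X : Set ℕ} (hX : X ∈ M) (hWO : InternalWO M X) :
    WellFounded fun a b => Nat.pair a b ∈ X := by
  refine WellFounded.wellFounded_iff_has_min.2 fun s hs => ?_
  by_contra! hmin
  obtain ⟨Z, hZM, hZ⟩ := hM.exists_mem_sat (e := fun _ => 0) (by simp [noMinimalFml, Arithmetic])
    (fun _ => hX) 1 ⟨s, (sat_noMinimalFml _ _ _).2 ⟨hs, hmin⟩⟩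
  obtain ⟨⟨a, ha⟩, hdesc⟩ := (sat_noMinimalFml _ _ _).1 hZ
  have hfield : ∀ a ∈ Z, a ∈ fieldOf X := fun a ha =>
    let ⟨b, _, hba⟩ := hdesc a ha
    ⟨b, .inr hba⟩
  obtain ⟨m, hm, -, hmin'⟩ := hWO.2.2.2 Z hZM ⟨a, ha, hfield a ha⟩
  obtain ⟨b, hb, hbm⟩ := hdesc m hm
  exact hmin' b hb (hfield b hb) hbm

theorem exists_hierarchy_of_wellFounded {X : Set ℕ} (wf : WellFounded fun a b => Nat.pair a b ∈ X)
    (Φ : Set ℕ → ℕ → Prop) :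
    ∃ Y : Set ℕ, ∀ j n, Nat.pair n j ∈ Y ↔ Φ (restrictBelow X Y j) n := by
  let col : ℕ → Set ℕ := wf.fix fun j col =>
    {n | Φ {p | ∃ m i, ∃ h : Nat.pair i j ∈ X, p = Nat.pair m i ∧ m ∈ col i h} n}
  let Y : Set ℕ := {p | p.unpair.1 ∈ col p.unpair.2}
  have hY : ∀ j, restrictBelow X Y j =
      {p | ∃ m i, ∃ _ : Nat.pair i j ∈ X, p = Nat.pair m i ∧ m ∈ col i} := by
    intro j
    ext p
    simp [restrictBelow, Y]
  have hcol : ∀ j, col j =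
      {n | Φ {p | ∃ m i, ∃ _ : Nat.pair i j ∈ X, p = Nat.pair m i ∧ m ∈ col i} n} :=
    wf.fix_eq _
  refine ⟨Y, fun j n => ?_⟩
  rw [hY, show Nat.pair n j ∈ Y ↔ n ∈ col j by simp [Y], hcol]
  rfl

def restrictBelowFml (J sx sy : ℕ) (t : Term) : Formula :=
  .nex (J + 1) (.nex (J + 2) (.and (pairEq (.var (J + 1)) (.var (J + 2)) t)
    (.and (memPair (J + 2) J (J + 3) sx) (.mem t sy))))

theorem sat_restrictBelowFml {J : ℕ} {t : Term} (ht : t.numBound ≤ J) (sx sy : ℕ)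
    (e : ℕ → ℕ) (E : ℕ → Set ℕ) :
    (restrictBelowFml J sx sy t).Sat e E ↔ t.val e ∈ restrictBelow (E sx) (E sy) (e J) := by
  have ht' : ∀ m i, t.val (Function.update (Function.update e (J + 1) m) (J + 2) i) = t.val e :=
    fun m i => Term.val_congr fun k hk => by
      rw [Function.update_of_ne (by omega), Function.update_of_ne (by omega)]
  simp only [restrictBelowFml, Sat, sat_pairEq, sat_memPair (by omega : J + 2 ≠ J + 3)
    (by omega : J ≠ J + 3), Term.val, ht']
  refine exists₂_congr fun m i => ?_
  simp only [Function.update_self, Function.update_of_ne (show J + 1 ≠ J + 2 by omega),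
    Function.update_of_ne (show J ≠ J + 2 by omega),
    Function.update_of_ne (show J ≠ J + 1 by omega)]
  exact ⟨fun ⟨h, hx, hy⟩ => ⟨h.symm, hx, h ▸ hy⟩, fun ⟨h, hx, hy⟩ => ⟨h.symm, hx, h ▸ hy⟩⟩

def hierarchyFml (θ : Formula) (J sx sy : ℕ) : Formula :=
  .nall J (.nall 0 ((memPair 0 J (J + 1) sy).iff (θ.substMemZero (restrictBelowFml J sx sy))))

theorem arithmetic_hierarchyFml {θ : Formula} (hθ : θ.Arithmetic) (J sx sy : ℕ) :
    (hierarchyFml θ J sx sy).Arithmetic := by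
  refine arithmetic_iff.2 ⟨arithmetic_memPair .., hθ.substMemZero fun t => ?_⟩
  simp [restrictBelowFml, Arithmetic]

theorem sat_hierarchyFml {θ : Formula} (hθ : θ.Arithmetic) {J sx sy : ℕ}
    (hJ : θ.numBound < J) (hsx : θ.setBound ≤ sx) (hsy : sx < sy)
    (e : ℕ → ℕ) (E : ℕ → Set ℕ) (X Y : Set ℕ) :
    (hierarchyFml θ J sx sy).Sat e (Function.update (Function.update E sx X) sy Y) ↔
      ∀ j n, Nat.pair n j ∈ Y ↔
        θ.Sat (Function.update e 0 n) (Function.update E 0 (restrictBelow X Y j)) := by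
  refine forall_congr' fun j => forall_congr' fun n => ?_
  rw [sat_iff, sat_memPair (by omega) (by omega), sat_substMemZero hθ hJ.le
    fun t e ht => sat_restrictBelowFml ht sx sy e _]
  have hJ0 : J ≠ 0 := by omega
  simp only [Function.update_self, Function.update_of_ne hJ0, Function.update_of_ne hsy.ne]
  refine iff_congr Iff.rfl
    ((sat_congr_num (fun i hi => ?_) _).trans (sat_congr_set (fun i hi => ?_) _)) <;>
  · simp only [Function.update_apply]
    split_ifs <;> first | rfl | omega

theorem IsBetaModel.satATR {M : Set (Set ℕ)} (hM : IsBetaModel M) : SatATR M := by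
  refine ⟨hM.satACA, fun θ hθ e E hE X hX hWO => ?_⟩
  obtain ⟨Y, hY⟩ := exists_hierarchy_of_wellFounded (hM.wellFounded_of_internalWO hX hWO)
    fun R n => θ.Sat (Function.update e 0 n) (Function.update E 0 R)
  have hsat := sat_hierarchyFml hθ (Nat.lt_succ_self θ.numBound) le_rfl
    (Nat.lt_succ_self θ.setBound) e E X
  obtain ⟨Y', hY'M, hY'⟩ := hM.exists_mem_sat (arithmetic_hierarchyFml hθ ..)
    (forall_update_mem hE hX _) _ ⟨Y, (hsat Y).2 hY⟩
  exact ⟨Y', hY'M, fun j _ n => by rw [hθ.satIn_iff_sat]; exact (hsat Y').1 hY' j n⟩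

/-- **Proposition 3.2.**  Every countable coded β-model satisfies ATR₀
(and hence also ACA₀). -/
theorem coded_beta_model_satisfies_ATR (C : Set ℕ) (h : IsCodedBetaModel C) :
    SatATR (codedFamily C) ∧ SatACA (codedFamily C) :=
  ⟨h.satATR, h.satACA⟩

end Paper
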